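/- arXiv:1404.0843 — 2 statements merged into one kernel-verified Lean document; each statement's English description precedes it below -/
import Mathlib

section
/- For every first cycle game on an arena with n vertices, if Player i has a winning strategy from vertex v, then Player i has a winning strategy from v generated by a Moore machine with at most (n-1)! memory states. -/
structure Arena (U : Type) where
  V : Type
  finV : Fintype V
  decV : DecidableEq V
  owner : V → Fin 2
  E : V → V → Prop
  nodead : ∀ v, ∃ w, E v w
  lab : V → V → U

namespace Arena

variable {U : Type} (A : Arena U)

instance : DecidableEq A.V := A.decV
instance : Fintype A.V := A.finV

/-- An infinite play: consecutive vertices are connected by edges. -/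
def IsPlay (π : ℕ → A.V) : Prop := ∀ j, A.E (π j) (π (j + 1))

/-- A strategy: given the history (past vertices, in order) and the current
vertex, produce the next vertex. -/
abbrev Strategy := List A.V → A.V → A.V

def Legal (S : A.Strategy) : Prop := ∀ h v, A.E v (S h v)

def Memoryless (S : A.Strategy) : Prop := ∀ h h' v, S h v = S h' v

/-- The history of a play: the first `j` vertices. -/
def hist (π : ℕ → A.V) (j : ℕ) : List A.V := (List.range j).map π

/-- A play is consistent with a strategy of player `i`. -/
def Consistent (i : Fin 2) (S : A.Strategy) (π : ℕ → A.V) : Prop :=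
  ∀ j, A.owner (π j) = i → π (j + 1) = S (A.hist π j) (π j)

/-- One step of the stack-based cycles-decomposition algorithm.  The stack is
a list of vertices (a simple path).  Pushing vertex `v`: if `v` already occurs
on the stack, the cycle from (the first occurrence of) `v` to the top is popped
and output (represented by its list of vertices, starting with `v`, with an
implicit closing edge back to `v`); otherwise `v` is pushed. -/
def step (s : List A.V) (v : A.V) : List A.V × Option (List A.V) :=
  if v ∈ s then (s.take (s.idxOf v + 1), some (s.drop (s.idxOf v)))
  else (s ++ [v], none)

/-- The stack after processing vertices `π 0, …, π n`. -/
def stackAt (π : ℕ → A.V) : ℕ → List A.V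
  | 0 => [π 0]
  | n + 1 => (A.step (stackAt π n) (π (n + 1))).1

/-- The cycle (if any) output while processing vertex `π (n+1)`. -/
def cycleAt (π : ℕ → A.V) (n : ℕ) : Option (List A.V) :=
  (A.step (A.stackAt π n) (π (n + 1))).2

/-- The labels of the edges of a cycle `[v, w₁, …, w_k]`, i.e. of the edges
`(v,w₁)(w₁,w₂)…(w_k,v)`. -/
def cycLabels : List A.V → List U
  | [] => []
  | v :: rest => List.zipWith A.lab (v :: rest) (rest ++ [v])

def Objective := (ℕ → A.V) → Prop

/-- First-cycle objective: the first cycle output by the decomposition has its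
labels in `Y`. -/
def FCObj (Y : Set (List U)) : A.Objective := fun π =>
  ∃ n c, A.cycleAt π n = some c ∧ (∀ m, m < n → A.cycleAt π m = none) ∧
    A.cycLabels c ∈ Y

/-- All-cycles objective: every cycle of the decomposition has labels in `Y`. -/
def ACObj (Y : Set (List U)) : A.Objective := fun π =>
  ∀ n c, A.cycleAt π n = some c → A.cycLabels c ∈ Y

def shift (π : ℕ → A.V) (k : ℕ) : ℕ → A.V := fun n => π (n + k)

/-- Suffix all-cycles objective: some suffix of the play has all cycles of its
decomposition with labels in `Y`. -/
def EACObj (Y : Set (List U)) : A.Objective := fun π =>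
  ∃ k, A.ACObj Y (A.shift π k)

/-- The objective induced by a winning condition `W ⊆ U^ω`. -/
def WObj (W : Set (ℕ → U)) : A.Objective := fun π =>
  (fun j => A.lab (π j) (π (j + 1))) ∈ W

/-- `S` is a winning strategy for player `i` from `v` for objective `O`. -/
def WinsFrom (O : A.Objective) (i : Fin 2) (S : A.Strategy) (v : A.V) : Prop :=
  A.Legal S ∧ ∀ π, A.IsPlay π → π 0 = v → A.Consistent i S π →
    (if i = 0 then O π else ¬ O π)

def WinRegion (O : A.Objective) (i : Fin 2) : Set A.V :=
  { v | ∃ S, A.WinsFrom O i S v }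

def PointwiseMemoryless (O : A.Objective) (i : Fin 2) : Prop :=
  ∀ v ∈ A.WinRegion O i, ∃ S, A.Memoryless S ∧ A.WinsFrom O i S v

def UniformMemoryless (O : A.Objective) (i : Fin 2) : Prop :=
  ∃ S, A.Memoryless S ∧ ∀ v ∈ A.WinRegion O i, A.WinsFrom O i S v

def Determined (O : A.Objective) : Prop :=
  ∀ v, v ∈ A.WinRegion O 0 ∨ v ∈ A.WinRegion O 1

def PointwiseMemDet (O : A.Objective) : Prop :=
  A.Determined O ∧ A.PointwiseMemoryless O 0 ∧ A.PointwiseMemoryless O 1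

def UniformMemDet (O : A.Objective) : Prop :=
  A.Determined O ∧ A.UniformMemoryless O 0 ∧ A.UniformMemoryless O 1

/-- The game `(A, O)` is `Y`-greedy. -/
def YGreedy (Y : Set (List U)) (O : A.Objective) : Prop :=
  (∀ π, A.IsPlay π → A.ACObj Y π → O π) ∧
  (∀ π, A.IsPlay π → A.ACObj Yᶜ π → ¬ O π)

/-- The arena `A` is `Y`-unambiguous. -/
def Unambiguous (Y : Set (List U)) : Prop :=
  ∀ π, A.IsPlay π → ¬ (A.EACObj Y π ∧ A.EACObj Yᶜ π)

/-- All vertices belong to player `i`. -/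
def SolitaireFor (i : Fin 2) : Prop := ∀ v, A.owner v = i

end Arena

/-- A cycle property is closed under cyclic permutations. -/
def ClosedCyc {U : Type} (Y : Set (List U)) : Prop :=
  ∀ (a : U) (b : List U), (a :: b) ∈ Y → (b ++ [a]) ∈ Y

/-- A cycle property is closed under concatenation. -/
def ClosedConcat {U : Type} (Y : Set (List U)) : Prop :=
  ∀ a b, a ∈ Y → b ∈ Y → (a ++ b) ∈ Y

/-- A Moore machine generating a strategy on arena `A`. -/
structure Moore {U : Type} (A : Arena U) where
  M : Type
  finM : Fintype M
  m0 : M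
  upd : A.V → M → M
  out : A.V → M → A.V

namespace Moore

variable {U : Type} {A : Arena U}

def card (Mm : Moore A) : ℕ := @Fintype.card Mm.M Mm.finM

/-- Memory state reached after reading a history. -/
def run (Mm : Moore A) (h : List A.V) : Mm.M :=
  h.foldl (fun m x => Mm.upd x m) Mm.m0

/-- The Moore machine generates strategy `S`. -/
def Generates (Mm : Moore A) (S : A.Strategy) : Prop :=
  ∀ h x, S h x = Mm.out x (Mm.run h)

end Moore

/-!
The outcome of a first-cycle game is fixed as soon as a vertex repeats, so a winning strategy
only matters on repetition-free histories `v :: w` followed by a fresh current vertex `x`.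
Such a history can be stored as a permutation of `V \ {v}` from which, knowing `x`, it can be
decoded again. A Moore machine whose states are these `(n-1)!` permutations therefore
reproduces the strategy wherever it matters.
-/

namespace List

section

variable {α : Type*}

def IsSimpleFrom (l : List α) (v : α) : Prop := l.Nodup ∧ l.head? = some v

theorem IsSimpleFrom.of_append {l₁ l₂ : List α} {v : α} (h : (l₁ ++ l₂).IsSimpleFrom v)
    (hl₁ : l₁ ≠ []) : l₁.IsSimpleFrom v :=
  ⟨(nodup_append.mp h.1).1, by rw [← head?_append_of_ne_nil _ hl₁]; exact h.2⟩

theorem IsSimpleFrom.eq_nil_iff {l : List α} {x v : α} (h : (l ++ [x]).IsSimpleFrom v) :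
    l = [] ↔ x = v := by
  rcases l with _ | ⟨a, w⟩
  · simpa [IsSimpleFrom] using h.2
  · obtain ⟨hnd, rfl⟩ : ((a :: w) ++ [x]).Nodup ∧ a = v := by simpa [IsSimpleFrom] using h
    simp only [reduceCtorEq, false_iff]
    rintro rfl
    simp at hnd

theorem rotate_one_eq_self_of_append_singleton {W u u' : List α} {x : α} (hW : W.Nodup)
    (hrot : u ++ [x] = W.rotate 1) (hW' : W = u' ++ [x]) : W.rotate 1 = W := by
  obtain ⟨a, r, rfl⟩ : ∃ a r, W = a :: r := exists_cons_of_ne_nil (by simp [hW'])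
  obtain rfl : a = x := by
    simp only [rotate_cons_succ, rotate_zero] at hrot
    exact singleton_inj.mp (append_inj' hrot.symm rfl).2
  rcases u' with _ | ⟨b, u''⟩
  · obtain rfl : r = [] := by simpa using hW'
    simp
  · obtain ⟨-, rfl⟩ := cons.inj hW'
    exact absurd (by simp) (nodup_cons.mp hW).1

theorem filter_notMem_eq_singleton [DecidableEq α] {W w : List α} {x : α} (hxW : x ∈ W) (hx : x ∉ w)
    (h2 : ¬ 2 ≤ (W.filter (· ∉ w)).length) : W.filter (· ∉ w) = [x] := by
  have hmem : x ∈ W.filter (· ∉ w) := by simp [hxW, hx]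
  match hC : W.filter (· ∉ w), hmem with
  | [a], hmem => rw [mem_singleton.mp hmem]
  | _ :: _ :: _, _ => rw [hC] at h2; simp at h2

end

variable {α : Type*} [LinearOrder α]

theorem not_pairwise_lt_append_cons {t : List α} {z : α} (as : List α) (ht : t ≠ [])
    (hz : ∀ y ∈ t, z < y) : ¬ (t ++ z :: as).Pairwise (· < ·) := by
  intro h
  obtain ⟨y, hy⟩ := exists_mem_of_ne_nil t ht
  exact lt_asymm (hz y hy) ((pairwise_append.mp h).2.2 y hy z mem_cons_self)

theorem eq_of_append_cons_eq_of_descent {t t' w w' : List α} {z z' : α}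
    (ht : t.Pairwise (· < ·)) (ht' : t'.Pairwise (· < ·)) (hne : t ≠ []) (hne' : t' ≠ [])
    (hz : ∀ y ∈ t, z < y) (hz' : ∀ y ∈ t', z' < y)
    (h : t ++ z :: w = t' ++ z' :: w') : w = w' := by
  rcases append_eq_append_iff.mp h with ⟨_ | ⟨b, as⟩, rfl, hs⟩ | ⟨_ | ⟨b, as⟩, rfl, hs⟩
  · simp_all
  · obtain ⟨rfl, -⟩ := cons.inj hs
    exact absurd ht' (not_pairwise_lt_append_cons as hne hz)
  · simp_all
  · obtain ⟨rfl, -⟩ := cons.inj hs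
    exact absurd ht (not_pairwise_lt_append_cons as hne' hz')

theorem exists_rotate_one_eq_descent {C : List α} (hC : C.Pairwise (· < ·))
    (h2 : 2 ≤ C.length) :
    ∃ t z, C.rotate 1 = t ++ [z] ∧ t ≠ [] ∧ t.Pairwise (· < ·) ∧ ∀ y ∈ t, z < y := by
  obtain ⟨z, y, t, rfl⟩ : ∃ z y t, C = z :: y :: t := by
    match C, h2 with
    | z :: y :: t, _ => exact ⟨z, y, t, rfl⟩
  exact ⟨y :: t, z, by simp [rotate_cons_succ], cons_ne_nil _ _, hC.of_cons,
    fun _ hy => rel_of_pairwise_cons hC hy⟩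

end List

section PathCode

variable {α : Type*} [LinearOrder α] {W w w' : List α} {x : α}

/-- `C` is the sorted list of the elements of `W` not on `w`. If `|C| ≥ 2`, the first descent of
`C.rotate 1 ++ w` sits just before the last entry of `C.rotate 1`, which locates where `w` starts.
If `C = [x]`, the code `w ++ [x]` is recognised by a decoder that knows `x`; its one clash, with
the code `W.rotate 1` of `w = []`, is resolved by sending that single path to the descent-free
list `W` instead. -/
def pathCode (W w : List α) : List α :=
  if 2 ≤ (W.filter (· ∉ w)).length then (W.filter (· ∉ w)).rotate 1 ++ w
  else if w ++ W.filter (· ∉ w) = W.rotate 1 then W else w ++ W.filter (· ∉ w)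

theorem pathCode_perm (hW : W.Nodup) (hw : w.Nodup) (hwW : w ⊆ W) : (pathCode W w).Perm W := by
  have hsplit : (w ++ W.filter (· ∉ w)).Perm W := by
    refine (List.perm_ext_iff_of_nodup ?_ hW).mpr fun a => ?_
    · exact List.nodup_append.mpr ⟨hw, hW.filter _, fun a ha b hb => by
        rintro rfl; simp [ha] at hb⟩
    · by_cases ha : a ∈ w
      · simp [ha, hwW ha]
      · simp [ha]
  unfold pathCode
  split_ifs
  · exact ((List.rotate_perm _ 1).append_right w).trans (List.perm_append_comm.trans hsplit)
  · exact List.Perm.refl W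
  · exact hsplit

theorem pathCode_ne_of_two_le (hW : W.Pairwise (· < ·)) (hx : x ∉ w)
    (h2 : 2 ≤ (W.filter (· ∉ w)).length) (hC' : W.filter (· ∉ w') = [x]) :
    pathCode W w ≠ pathCode W w' := by
  obtain ⟨t, z, hrot, hne, ht, hz⟩ :=
    List.exists_rotate_one_eq_descent (hW.sublist List.filter_sublist) h2
  rw [pathCode, if_pos h2, hrot, pathCode, hC', if_neg (by simp)]
  split_ifs with hR
  · intro h
    exact List.not_pairwise_lt_append_cons w hne hz (by simpa [← h] using hW)
  · intro h
    rcases w.eq_nil_or_concat with rfl | ⟨w₀, y, rfl⟩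
    · simp only [List.not_mem_nil, not_false_eq_true, decide_true, List.filter_true] at hrot
      exact hR (by rw [hrot, ← h, List.append_nil])
    · have h' : (t ++ [z] ++ w₀) ++ [y] = w' ++ [x] := by
        simpa only [List.append_assoc, List.concat_eq_append] using h
      obtain rfl : y = x := List.singleton_inj.mp (List.append_inj' h' rfl).2
      simp at hx

theorem pathCode_inj_of_singleton (hW : W.Nodup) (hC : W.filter (· ∉ w) = [x])
    (hC' : W.filter (· ∉ w') = [x]) (h : pathCode W w = pathCode W w') : w = w' := by
  have h1 : ¬ 2 ≤ [x].length := by simp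
  simp only [pathCode, hC, hC', if_neg h1] at h
  refine List.append_cancel_right (bs := [x]) ?_
  split_ifs at h with h₁ h₂ h₂
  · exact h₁.trans h₂.symm
  · exact absurd (h.symm.trans (List.rotate_one_eq_self_of_append_singleton hW h₁ h).symm) h₂
  · exact absurd (h.trans (List.rotate_one_eq_self_of_append_singleton hW h₂ h.symm).symm) h₁
  · exact h

theorem pathCode_inj (hW : W.Pairwise (· < ·)) (hxW : x ∈ W) (hx : x ∉ w) (hx' : x ∉ w')
    (h : pathCode W w = pathCode W w') : w = w' := by
  by_cases h2 : 2 ≤ (W.filter (· ∉ w)).length <;>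
    by_cases h2' : 2 ≤ (W.filter (· ∉ w')).length
  · obtain ⟨t, z, hrot, hne, ht, hz⟩ :=
      List.exists_rotate_one_eq_descent (hW.sublist List.filter_sublist) h2
    obtain ⟨t', z', hrot', hne', ht', hz'⟩ :=
      List.exists_rotate_one_eq_descent (hW.sublist List.filter_sublist) h2'
    rw [pathCode, if_pos h2, hrot, pathCode, if_pos h2', hrot'] at h
    exact List.eq_of_append_cons_eq_of_descent ht ht' hne hne' hz hz' (by simpa using h)
  · exact absurd h (pathCode_ne_of_two_le hW hx h2 (List.filter_notMem_eq_singleton hxW hx' h2'))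
  · exact absurd h.symm
      (pathCode_ne_of_two_le hW hx' h2' (List.filter_notMem_eq_singleton hxW hx h2))
  · exact pathCode_inj_of_singleton hW.nodup (List.filter_notMem_eq_singleton hxW hx h2)
      (List.filter_notMem_eq_singleton hxW hx' h2') h

end PathCode

theorem exists_code_injOn_simpleFrom {V : Type} [Fintype V] (v : V) :
    ∃ (M : Type) (_ : Fintype M), Fintype.card M = (Fintype.card V - 1).factorial ∧
      ∃ code : List V → M, ∀ h h' x, (h ++ [x]).IsSimpleFrom v → (h' ++ [x]).IsSimpleFrom v →
        code h = code h' → h = h' := by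
  let _ : LinearOrder V := LinearOrder.lift' _ (Fintype.equivFin V).injective
  set W := (Finset.univ.erase v).sort (· ≤ ·)
  have hW : W.Pairwise (· < ·) := (Finset.sortedLT_sort _).pairwise
  have hmemW : ∀ y, y ∈ W ↔ y ≠ v := by simp [W]
  set s := W.permutations.toFinset
  have hcode_mem : ∀ {w x}, ((v :: w) ++ [x]).Nodup → pathCode W w ∈ s := fun hnd => by
    have hvw := List.nodup_cons.mp (List.nodup_append.mp hnd).1
    refine List.mem_toFinset.mpr (List.mem_permutations.mpr (pathCode_perm hW.nodup hvw.2 ?_))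
    exact fun y hy => (hmemW y).mpr fun hyv => hvw.1 (hyv ▸ hy)
  let code : List V → s := fun h => if hp : pathCode W h.tail ∈ s then ⟨_, hp⟩
    else ⟨W, List.mem_toFinset.mpr (List.mem_permutations.mpr (List.Perm.refl W))⟩
  have hcode : ∀ {w x}, ((v :: w) ++ [x]).Nodup → (code (v :: w) : List V) = pathCode W w :=
    fun hnd => congrArg Subtype.val (dif_pos (hcode_mem hnd))
  refine ⟨s, inferInstance, ?_, code, fun h h' x hP hP' heq => ?_⟩
  · rw [Fintype.card_coe, List.toFinset_card_of_nodup (List.nodup_permutations _ hW.nodup),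
      List.length_permutations, Finset.length_sort, Finset.card_erase_of_mem (Finset.mem_univ v),
      Finset.card_univ]
  by_cases hxv : x = v
  · rw [hP.eq_nil_iff.mpr hxv, hP'.eq_nil_iff.mpr hxv]
  obtain ⟨a, w, rfl⟩ := List.exists_cons_of_ne_nil (mt hP.eq_nil_iff.mp hxv)
  obtain ⟨a', w', rfl⟩ := List.exists_cons_of_ne_nil (mt hP'.eq_nil_iff.mp hxv)
  obtain rfl : v = a := by simpa using hP.2.symm
  obtain rfl : v = a' := by simpa using hP'.2.symm
  replace heq := congrArg Subtype.val heq
  rw [hcode hP.1, hcode hP'.1] at heq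
  have hx : ∀ {u : List V}, ((v :: u) ++ [x]).Nodup → x ∉ u := fun hnd hxu => by
    simp only [List.cons_append, List.nodup_cons, List.nodup_append] at hnd
    exact hnd.2.2.2 x hxu x (List.mem_singleton_self x) rfl
  rw [pathCode_inj hW ((hmemW x).mpr hxv) (hx hP.1) (hx hP'.1) heq]

namespace Moore

variable {U : Type} {A : Arena U}

def strategy (Mm : Moore A) : A.Strategy := fun h x => Mm.out x (Mm.run h)

theorem run_append (Mm : Moore A) (h : List A.V) (x : A.V) :
    Mm.run (h ++ [x]) = Mm.upd x (Mm.run h) := by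
  simp [run]

open Classical in
noncomputable def ofCode {M : Type} [Fintype M] (P : List A.V → A.V → Prop)
    (code : List A.V → M) (S : A.Strategy) : Moore A where
  M := M
  finM := inferInstance
  m0 := code []
  upd x m := if hm : ∃ h, P h x ∧ code h = m then code (hm.choose ++ [x]) else m
  out x m := if hm : ∃ h, P h x ∧ code h = m then S hm.choose x else S [] x

section OfCode

variable {M : Type} {P : List A.V → A.V → Prop} {code : List A.V → M}

theorem choose_eq_of_code (hcode : ∀ h h' x, P h x → P h' x → code h = code h' → h = h')
    {h : List A.V} {x : A.V} (hP : P h x) (hm : ∃ h', P h' x ∧ code h' = code h) : hm.choose = h :=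
  hcode _ _ x hm.choose_spec.1 hP hm.choose_spec.2

theorem run_ofCode [Fintype M] (hcode : ∀ h h' x, P h x → P h' x → code h = code h' → h = h')
    (hP : ∀ h x y, P (h ++ [x]) y → P h x) (S : A.Strategy) :
    ∀ h x, P h x → (ofCode P code S).run h = code h := by
  intro h
  induction h using List.reverseRecOn with
  | nil => exact fun _ _ => rfl
  | append_singleton h y ih =>
    intro x hx
    have hy := hP h y x hx
    have hm : ∃ h', P h' y ∧ code h' = code h := ⟨h, hy, rfl⟩
    rw [run_append, ih y hy]
    simp only [ofCode, dif_pos hm, choose_eq_of_code hcode hy hm]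

theorem strategy_ofCode [Fintype M]
    (hcode : ∀ h h' x, P h x → P h' x → code h = code h' → h = h')
    (hP : ∀ h x y, P (h ++ [x]) y → P h x) (S : A.Strategy)
    {h : List A.V} {x : A.V} (hx : P h x) : (ofCode P code S).strategy h x = S h x := by
  have hm : ∃ h', P h' x ∧ code h' = code h := ⟨h, hx, rfl⟩
  rw [strategy, run_ofCode hcode hP S h x hx]
  simp only [ofCode, dif_pos hm, choose_eq_of_code hcode hx hm]

end OfCode

theorem legal_strategy_ofCode {M : Type} [Fintype M] (P : List A.V → A.V → Prop)
    (code : List A.V → M) {S : A.Strategy} (hS : A.Legal S) :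
    A.Legal (ofCode P code S).strategy := by
  intro h x
  simp only [strategy, ofCode]
  split_ifs
  exacts [hS _ x, hS [] x]

end Moore

namespace Arena

variable {U : Type} (A : Arena U)

theorem hist_succ (π : ℕ → A.V) (j : ℕ) : A.hist π (j + 1) = A.hist π j ++ [π j] := by
  simp [hist, List.range_succ]

theorem length_hist (π : ℕ → A.V) (j : ℕ) : (A.hist π j).length = j := by
  simp [hist]

theorem head?_hist_succ (π : ℕ → A.V) (j : ℕ) : (A.hist π (j + 1)).head? = some (π 0) := by
  simp [hist, List.head?_range]

theorem hist_congr {π π' : ℕ → A.V} {j : ℕ} (h : ∀ k < j, π k = π' k) :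
    A.hist π j = A.hist π' j :=
  List.map_congr_left fun k hk => h k (List.mem_range.mp hk)

theorem stackAt_congr {π π' : ℕ → A.V} {j : ℕ} (h : ∀ k ≤ j, π k = π' k) :
    A.stackAt π j = A.stackAt π' j := by
  induction j with
  | zero => simp [stackAt, h 0 le_rfl]
  | succ j ih =>
    simp only [stackAt, ih fun k hk => h k (by omega), h (j + 1) le_rfl]

theorem cycleAt_congr {π π' : ℕ → A.V} {m : ℕ} (h : ∀ k ≤ m + 1, π k = π' k) :
    A.cycleAt π m = A.cycleAt π' m := by
  rw [cycleAt, cycleAt, A.stackAt_congr fun k hk => h k (by omega), h (m + 1) le_rfl]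

theorem stackAt_eq_hist_of_cycleAt_eq_none {π : ℕ → A.V} {k : ℕ}
    (h : ∀ m < k, A.cycleAt π m = none) :
    A.stackAt π k = A.hist π (k + 1) ∧ (A.hist π (k + 1)).Nodup := by
  induction k with
  | zero => simp [stackAt, hist]
  | succ k ih =>
    obtain ⟨hstack, hnd⟩ := ih fun m hm => h m (by omega)
    have hfresh : π (k + 1) ∉ A.stackAt π k := fun hmem => by
      simpa [cycleAt, step, hmem] using h k (by omega)
    rw [hstack] at hfresh
    refine ⟨by simp only [stackAt, step, hstack, if_neg hfresh, ← hist_succ], ?_⟩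
    rw [hist_succ]
    refine List.nodup_append.mpr ⟨hnd, List.nodup_singleton _, fun a ha b hb hab => ?_⟩
    exact hfresh (List.mem_singleton.mp hb ▸ hab ▸ ha)

theorem exists_cycleAt_ne_none {π : ℕ → A.V} {N : ℕ} (hrep : ¬ (A.hist π (N + 1)).Nodup) :
    ∃ m < N, A.cycleAt π m ≠ none := by
  by_contra! h
  exact hrep (A.stackAt_eq_hist_of_cycleAt_eq_none h).2

theorem FCObj_of_cycleAt_eq {Y : Set (List U)} {π π' : ℕ → A.V} {n : ℕ}
    (h : ∀ m ≤ n, A.cycleAt π m = A.cycleAt π' m) (hn : A.cycleAt π n ≠ none)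
    (hπ : A.FCObj Y π) : A.FCObj Y π' := by
  obtain ⟨k, c, hk, hbefore, hY⟩ := hπ
  have hkn : k ≤ n := by
    by_contra! hnk
    exact hn (hbefore n hnk)
  refine ⟨k, c, h k hkn ▸ hk, fun m hm => ?_, hY⟩
  rw [← h m (by omega)]
  exact hbefore m hm

theorem FCObj_iff_of_eq_of_not_nodup {Y : Set (List U)} {π π' : ℕ → A.V} {N : ℕ}
    (h : ∀ j ≤ N, π j = π' j) (hrep : ¬ (A.hist π (N + 1)).Nodup) :
    A.FCObj Y π ↔ A.FCObj Y π' := by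
  obtain ⟨n, hnN, hn⟩ := A.exists_cycleAt_ne_none hrep
  have hcyc : ∀ m ≤ n, A.cycleAt π m = A.cycleAt π' m :=
    fun m hm => A.cycleAt_congr fun k hk => h k (by omega)
  exact ⟨A.FCObj_of_cycleAt_eq hcyc hn,
    A.FCObj_of_cycleAt_eq (fun m hm => (hcyc m hm).symm) (hcyc n le_rfl ▸ hn)⟩

def playState (g : List A.V → A.V → A.V) (v : A.V) : ℕ → List A.V × A.V
  | 0 => ([], v)
  | k + 1 => let p := playState g v k; (p.1 ++ [p.2], g p.1 p.2)

theorem playState_fst (g : List A.V → A.V → A.V) (v : A.V) (k : ℕ) :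
    (A.playState g v k).1 = A.hist (fun j => (A.playState g v j).2) k := by
  induction k with
  | zero => rfl
  | succ k ih => rw [hist_succ, ← ih]; rfl

theorem exists_play_extending {i : Fin 2} {S : A.Strategy} (hS : A.Legal S) (π : ℕ → A.V)
    (N : ℕ) (hplay : ∀ j < N, A.E (π j) (π (j + 1)))
    (hcons : ∀ j < N, A.owner (π j) = i → π (j + 1) = S (A.hist π j) (π j)) :
    ∃ π', A.IsPlay π' ∧ A.Consistent i S π' ∧ ∀ j ≤ N, π' j = π j := by
  classical
  let g : List A.V → A.V → A.V := fun h x =>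
    if h.length < N then π (h.length + 1)
    else if A.owner x = i then S h x else (A.nodead x).choose
  let π' : ℕ → A.V := fun j => (A.playState g (π 0) j).2
  have hsucc : ∀ j, π' (j + 1) = g (A.hist π' j) (π' j) := fun j => by
    simp only [π', playState, playState_fst]
  have hpre : ∀ j ≤ N, π' j = π j := by
    intro j hj
    induction j with
    | zero => rfl
    | succ j ih => simp [hsucc, g, length_hist, show j < N by omega]
  have hhist : ∀ j ≤ N, A.hist π' j = A.hist π j :=
    fun j hj => A.hist_congr fun k hk => hpre k (by omega)
  refine ⟨π', fun j => ?_, fun j hown => ?_, hpre⟩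
  · by_cases hj : j < N
    · rw [hpre j hj.le, hpre (j + 1) hj]
      exact hplay j hj
    · rw [hsucc]
      simp only [g, length_hist, if_neg hj]
      split_ifs
      exacts [hS _ _, (A.nodead _).choose_spec]
  · by_cases hj : j < N
    · rw [hpre j hj.le] at hown
      rw [hpre j hj.le, hpre (j + 1) hj, hhist j hj.le]
      exact hcons j hj hown
    · rw [hsucc]
      simp only [g, length_hist, if_neg hj, if_pos hown]

theorem winsFrom_FCObj_of_eq_on_simple {Y : Set (List U)} {i : Fin 2} {S S' : A.Strategy}
    {v : A.V} (hS : A.WinsFrom (A.FCObj Y) i S v) (hS' : A.Legal S')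
    (hagree : ∀ h x, (h ++ [x]).IsSimpleFrom v → S' h x = S h x) :
    A.WinsFrom (A.FCObj Y) i S' v := by
  refine ⟨hS', fun π hπ h0 hcons => ?_⟩
  -- Past its first repeated vertex, `π` is replaced by a continuation following `S`;
  -- this does not change the first cycle.
  have hex : ∃ N, ¬ (A.hist π (N + 1)).Nodup := ⟨Fintype.card A.V, fun hnd => by
    simpa [length_hist] using hnd.length_le_card⟩
  have hmove : ∀ j < Nat.find hex, A.owner (π j) = i → π (j + 1) = S (A.hist π j) (π j) := by
    intro j hj hown
    have hsimple := not_not.mp (Nat.find_min hex hj)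
    rw [hist_succ] at hsimple
    rw [hcons j hown, hagree _ _ ⟨hsimple, by rw [← hist_succ, head?_hist_succ, h0]⟩]
  obtain ⟨π', hπ', hcons', hpre⟩ := A.exists_play_extending hS.1 π _ (fun j _ => hπ j) hmove
  have hwin := hS.2 π' hπ' (by rw [hpre 0 (Nat.zero_le _), h0]) hcons'
  have hiff := A.FCObj_iff_of_eq_of_not_nodup (Y := Y) (fun j hj => (hpre j hj).symm)
    (Nat.find_spec hex)
  split_ifs at hwin ⊢ <;> simpa only [hiff] using hwin

end Arena

/-- (n-1)! memory suffices for winning strategies in FCGs. -/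
theorem stmt4 {U : Type} (A : Arena U) (Y : Set (List U)) (i : Fin 2) (v : A.V)
    (hwin : v ∈ A.WinRegion (A.FCObj Y) i) :
    ∃ S, A.WinsFrom (A.FCObj Y) i S v ∧
      ∃ Mm : Moore A, Mm.Generates S ∧
        Mm.card ≤ Nat.factorial (Fintype.card A.V - 1) := by
  obtain ⟨S, hS⟩ := hwin
  obtain ⟨M, _, hcard, code, hcode⟩ := exists_code_injOn_simpleFrom v
  let P : List A.V → A.V → Prop := fun h x => (h ++ [x]).IsSimpleFrom v
  have hP : ∀ h x y, P (h ++ [x]) y → P h x := fun _ _ _ hs => hs.of_append (by simp)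
  let Mm := Moore.ofCode P code S
  have hwins : A.WinsFrom (A.FCObj Y) i Mm.strategy v :=
    A.winsFrom_FCObj_of_eq_on_simple hS (Moore.legal_strategy_ofCode P code hS.1)
      fun _ _ hx => Moore.strategy_ofCode hcode hP S hx
  exact ⟨Mm.strategy, hwins, Mm, fun _ _ => rfl, hcard.le⟩
end

section
/- If Y is closed under cyclic permutations and both Y and its complement ¬Y are closed under concatenation, then every arena A is Y-unambiguous: no play has both a suffix all of whose decomposition cycles have labels in Y and a suffix all of whose decomposition cycles have labels in ¬Y. -/
/-!
Both decompositions keep simple paths as stacks, so by pigeonhole some stretch of the play, a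
closed walk, brings both stacks back to the states they had at its start. Such a walk, rotated to
start where its stack is lowest, is the cycle popped on the way down to that point with all other
popped cycles inserted into it. Words of `Y` plus the empty word are closed under inserting words
of `Y`, by rotation and concatenation, so the labels of the walk lie in `Y`; the same argument for
the other decomposition puts them in `¬Y`.
-/

section CycleProperty

variable {U : Type} {Y : Set (List U)}

theorem ClosedCyc.append_comm_mem (hY : ClosedCyc Y) {x y : List U} (h : x ++ y ∈ Y) :
    y ++ x ∈ Y := by
  induction x generalizing y with
  | nil => simpa using h
  | cons a x ih =>
    have h' : x ++ (y ++ [a]) ∈ Y := by simpa using hY a (x ++ y) h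
    simpa using ih h'

theorem ClosedCyc.compl (hY : ClosedCyc Y) : ClosedCyc Yᶜ :=
  fun a b hab hba => hab (by simpa using hY.append_comm_mem hba)

theorem ClosedCyc.insert_nil (hY : ClosedCyc Y) : ClosedCyc (insert [] Y) := by
  rintro a b (h | h)
  · simp at h
  · exact Or.inr (hY a b h)

theorem ClosedConcat.insert_nil (hY : ClosedConcat Y) : ClosedConcat (insert [] Y) := by
  rintro a b (rfl | ha) (rfl | hb)
  · simp
  · simpa using Or.inr hb
  · simpa using Or.inr ha
  · exact Or.inr (hY a b ha hb)

/-- `z ++ (x ++ y)` is a rotation of `y ++ z ++ x`. -/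
theorem ClosedCyc.append_append_mem (hcyc : ClosedCyc Y) (hcat : ClosedConcat Y)
    {x y z : List U} (hz : z ∈ Y) (h : y ++ x ∈ Y) : y ++ z ++ x ∈ Y := by
  have := hcat z _ hz (hcyc.append_comm_mem h)
  simpa using hcyc.append_comm_mem (x := z ++ x) (by simpa using this)

end CycleProperty

namespace Arena

variable {U : Type} (A : Arena U)

def walkLabels (l : List A.V) : List U := List.zipWith A.lab l l.tail

theorem length_walkLabels (l : List A.V) : (A.walkLabels l).length = l.length - 1 := by
  simp [walkLabels]

theorem walkLabels_append_cons (l₁ : List A.V) (x : A.V) (l₂ : List A.V) :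
    A.walkLabels (l₁ ++ x :: l₂) = A.walkLabels (l₁ ++ [x]) ++ A.walkLabels (x :: l₂) := by
  induction l₁ with
  | nil => simp [walkLabels]
  | cons a l ih => cases l <;> simp_all [walkLabels]

theorem cycLabels_cons (x : A.V) (C : List A.V) :
    A.cycLabels (x :: C) = A.walkLabels (x :: C ++ [x]) := by
  have := List.zipWith_append (f := A.lab) (l₁ := x :: C) (l₁' := [x]) (l₂ := C ++ [x])
    (l₂' := []) (by simp)
  simpa [cycLabels, walkLabels] using this.symm

theorem step_fst_of_snd_eq_none {s : List A.V} {x : A.V} (h : (A.step s x).2 = none) :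
    (A.step s x).1 = s ++ [x] := by
  unfold step at h ⊢
  split_ifs at h ⊢ with hx
  simp_all

theorem exists_of_step_snd_eq_some {s c : List A.V} {x : A.V} (h : (A.step s x).2 = some c) :
    ∃ l C, s = l ++ x :: C ∧ (A.step s x).1 = l ++ [x] ∧ c = x :: C := by
  unfold step at h ⊢
  split_ifs at h ⊢ with hx
  · have hlt : s.idxOf x < s.length := List.idxOf_lt_length_iff.2 hx
    have hcons : s.drop (s.idxOf x) = x :: s.drop (s.idxOf x + 1) := by
      rw [List.drop_eq_getElem_cons hlt, List.getElem_idxOf]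
    refine ⟨s.take (s.idxOf x), s.drop (s.idxOf x + 1), ?_, ?_, ?_⟩
    · rw [← hcons, List.take_append_drop]
    · rw [List.take_add_one, List.getElem?_eq_getElem hlt, List.getElem_idxOf]; rfl
    · simp_all

theorem getLast?_step_fst (s : List A.V) (x : A.V) : (A.step s x).1.getLast? = some x := by
  rcases h : (A.step s x).2 with _ | c
  · simp [A.step_fst_of_snd_eq_none h]
  · obtain ⟨l, C, -, hs, -⟩ := A.exists_of_step_snd_eq_some h
    simp [hs]

theorem nodup_step_fst {s : List A.V} (hs : s.Nodup) (x : A.V) : (A.step s x).1.Nodup := by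
  unfold step
  split_ifs with hx
  · exact hs.sublist (List.take_sublist _ _)
  · exact hs.append (List.nodup_singleton x) (by simpa using hx)

/-- A vertex already in the bottom part `p` would pop the stack down into `p`. -/
theorem step_append_of_length_lt {p t : List A.V} {x : A.V}
    (h : p.length < (A.step (p ++ t) x).1.length) :
    A.step (p ++ t) x = (p ++ (A.step t x).1, (A.step t x).2) := by
  by_cases hp : x ∈ p
  · have hlt := List.idxOf_lt_length_iff.2 hp
    simp only [step, List.mem_append, hp, true_or, if_true, List.idxOf_append_of_mem hp,
      List.length_take] at h
    omega
  · unfold step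
    simp only [List.mem_append, hp, false_or, List.idxOf_append_of_notMem hp]
    split_ifs
    · rw [add_assoc, List.take_length_add_append, List.drop_length_add_append]
    · simp

def run : List A.V → List A.V → List A.V
  | s, [] => s
  | s, x :: w => run (A.step s x).1 w

def CyclesIn (W : Set (List U)) : List A.V → List A.V → Prop
  | _, [] => True
  | s, x :: w => (∀ c, (A.step s x).2 = some c → A.cycLabels c ∈ W) ∧ CyclesIn W (A.step s x).1 w

theorem run_append (s w₁ w₂ : List A.V) : A.run s (w₁ ++ w₂) = A.run (A.run s w₁) w₂ := by
  induction w₁ generalizing s with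
  | nil => rfl
  | cons x w ih => exact ih _

theorem CyclesIn.of_append {W : Set (List U)} {s w₁ w₂ : List A.V}
    (h : A.CyclesIn W s (w₁ ++ w₂)) : A.CyclesIn W s w₁ ∧ A.CyclesIn W (A.run s w₁) w₂ := by
  induction w₁ generalizing s with
  | nil => exact ⟨trivial, h⟩
  | cons x w ih => exact ⟨⟨h.1, (ih h.2).1⟩, (ih h.2).2⟩

theorem getLast?_run (s w : List A.V) : (A.run s w).getLast? = (s ++ w).getLast? := by
  induction w generalizing s with
  | nil => simp [run]
  | cons x w ih =>
    rw [run, ih, List.getLast?_append, List.getLast?_append, A.getLast?_step_fst]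
    simp [List.getLast?_cons]

theorem run_append_left {p t w : List A.V}
    (h : ∀ w', w' <+: w → p.length < (A.run (p ++ t) w').length) :
    A.run (p ++ t) w = p ++ A.run t w := by
  induction w generalizing t with
  | nil => rfl
  | cons x w ih =>
    have hx := A.step_append_of_length_lt (h [x] (by simp))
    simp only [run, hx]
    refine ih fun w' hw' => ?_
    simpa [run, hx] using h (x :: w') (List.cons_prefix_cons.2 ⟨rfl, hw'⟩)

theorem CyclesIn.of_append_left {W : Set (List U)} {p t w : List A.V}
    (h : ∀ w', w' <+: w → p.length < (A.run (p ++ t) w').length)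
    (hc : A.CyclesIn W (p ++ t) w) : A.CyclesIn W t w := by
  induction w generalizing t with
  | nil => trivial
  | cons x w ih =>
    have hx := A.step_append_of_length_lt (h [x] (by simp))
    simp only [CyclesIn, hx] at hc
    refine ⟨hc.1, ih (fun w' hw' => ?_) hc.2⟩
    simpa [run, hx] using h (x :: w') (List.cons_prefix_cons.2 ⟨rfl, hw'⟩)

theorem getLast?_stackAt (ρ : ℕ → A.V) : ∀ n, (A.stackAt ρ n).getLast? = some (ρ n)
  | 0 => rfl
  | _ + 1 => A.getLast?_step_fst _ _

theorem nodup_stackAt (ρ : ℕ → A.V) : ∀ n, (A.stackAt ρ n).Nodup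
  | 0 => List.nodup_singleton _
  | n + 1 => A.nodup_step_fst (nodup_stackAt ρ n) _

theorem run_stackAt (ρ : ℕ → A.V) (a n : ℕ) :
    A.run (A.stackAt ρ a) ((List.range' (a + 1) n).map ρ) = A.stackAt ρ (a + n) := by
  induction n generalizing a with
  | zero => rfl
  | succ n ih =>
    rw [List.range'_succ, List.map_cons, run, show a + (n + 1) = a + 1 + n by omega, ← ih (a + 1)]
    rfl

section Objective

variable {A}

theorem ACObj.mono {W W' : Set (List U)} {ρ : ℕ → A.V} (h : A.ACObj W ρ) (hW : W ⊆ W') :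
    A.ACObj W' ρ :=
  fun n c hc => hW (h n c hc)

theorem ACObj.cyclesIn {W : Set (List U)} {ρ : ℕ → A.V} (h : A.ACObj W ρ) (a n : ℕ) :
    A.CyclesIn W (A.stackAt ρ a) ((List.range' (a + 1) n).map ρ) := by
  induction n generalizing a with
  | zero => trivial
  | succ n ih =>
    rw [List.range'_succ, List.map_cons]
    exact ⟨h a, ih (a + 1)⟩

end Objective

theorem map_shift_range' (π : ℕ → A.V) (k a n : ℕ) :
    (List.range' a n).map (A.shift π k) = (List.range' (a + k) n).map π := by
  rw [add_comm, ← List.map_add_range', List.map_map]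
  exact List.map_congr_left fun i _ => by simp [shift, add_comm]

theorem exists_stackAt_eq (ρ₁ ρ₂ : ℕ → A.V) (b₁ b₂ : ℕ) :
    ∃ a n, 0 < n ∧ A.stackAt ρ₁ (b₁ + a + n) = A.stackAt ρ₁ (b₁ + a) ∧
      A.stackAt ρ₂ (b₂ + a + n) = A.stackAt ρ₂ (b₂ + a) := by
  let f : ℕ → {s : List A.V // s.Nodup} × {s : List A.V // s.Nodup} := fun i =>
    (⟨_, A.nodup_stackAt ρ₁ (b₁ + i)⟩, ⟨_, A.nodup_stackAt ρ₂ (b₂ + i)⟩)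
  obtain ⟨a, b, hab, hf⟩ :=
    Set.Finite.exists_lt_map_eq_of_forall_mem (f := f) (fun _ => Set.mem_univ _) Set.finite_univ
  obtain ⟨n, rfl⟩ := Nat.exists_eq_add_of_lt hab
  simp only [f, Prod.ext_iff, Subtype.ext_iff] at hf
  exact ⟨a, n + 1, n.succ_pos, by simpa [add_assoc] using hf.1.symm,
    by simpa [add_assoc] using hf.2.symm⟩

section ClosedSet

variable {A} {W : Set (List U)}

/-- Popping a cycle inserts its labels, a word of `W`, into the walk. -/
theorem CyclesIn.walkLabels_append_mem (hcyc : ClosedCyc W) (hcat : ClosedConcat W)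
    {s w : List A.V} {r : List U} (hc : A.CyclesIn W s w)
    (h : A.walkLabels (A.run s w) ++ r ∈ W) : A.walkLabels (s ++ w) ++ r ∈ W := by
  induction w generalizing s with
  | nil => simpa [run] using h
  | cons x w ih =>
    have hw := ih hc.2 h
    rcases hx : (A.step s x).2 with _ | c
    · simpa [A.step_fst_of_snd_eq_none hx] using hw
    · obtain ⟨l, C, rfl, hl, rfl⟩ := A.exists_of_step_snd_eq_some hx
      rw [hl, List.append_assoc, List.singleton_append, A.walkLabels_append_cons] at hw
      have hC := A.cycLabels_cons x C ▸ hc.1 _ hx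
      have key := hcyc.append_append_mem hcat hC (List.append_assoc _ _ r ▸ hw)
      rw [List.append_assoc, List.cons_append, A.walkLabels_append_cons l x, ← List.cons_append,
        A.walkLabels_append_cons (x :: C) x]
      simpa only [List.append_assoc] using key

/-- The walk, rotated to start at `v`, reads as the cycle popped on the way back to `[v]` with the
other popped cycles inserted. -/
theorem walkLabels_mem_of_run_eq_singleton (hcyc : ClosedCyc W) (hcat : ClosedConcat W)
    (hnil : [] ∈ W) {t w₁ w₂ : List A.V} {u v : A.V} (hu : t.getLast? = some u)
    (h₁ : A.run t w₁ = [v]) (h₂ : A.run [v] w₂ = t) (hc₁ : A.CyclesIn W t w₁)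
    (hc₂ : A.CyclesIn W [v] w₂) : A.walkLabels (u :: (w₁ ++ w₂)) ∈ W := by
  obtain ⟨t', rfl⟩ := List.getLast?_eq_some_iff.1 hu
  obtain ⟨l, hl⟩ : ∃ l, u :: w₁ = l ++ [v] := by
    rw [← List.getLast?_eq_some_iff]
    simpa [getLast?_run, List.getLast?_append, h₁] using (A.getLast?_run (t' ++ [u]) w₁).symm
  have hback := hc₁.walkLabels_append_mem hcyc hcat (r := []) (by simpa [h₁, walkLabels] using hnil)
  rw [List.append_assoc, List.singleton_append, A.walkLabels_append_cons] at hback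
  have hloop := hc₂.walkLabels_append_mem hcyc hcat (r := A.walkLabels (u :: w₁))
    (by simpa [h₂] using hback)
  rw [← List.cons_append, hl, List.append_assoc, List.singleton_append, A.walkLabels_append_cons,
    ← hl]
  simpa using hcyc.append_comm_mem hloop

/-- Split the walk where the stack is lowest, at `p ++ [v]`: `p` is never popped, so both halves
run as if started from `[v]`. -/
theorem walkLabels_mem_of_run_eq_self (hcyc : ClosedCyc W) (hcat : ClosedConcat W)
    (hnil : [] ∈ W) {s w : List A.V} {u : A.V} (hu : s.getLast? = some u)
    (hrun : A.run s w = s) (hc : A.CyclesIn W s w) : A.walkLabels (u :: w) ∈ W := by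
  obtain ⟨w₁, hw₁, hmin⟩ := w.inits.toFinset.exists_min_image (fun w' => (A.run s w').length)
    ⟨[], by simp⟩
  simp only [List.mem_toFinset, List.mem_inits] at hw₁ hmin
  obtain ⟨w₂, rfl⟩ := hw₁
  obtain ⟨v, hv⟩ : ∃ v, (A.run s w₁).getLast? = some v := by
    simp [getLast?_run, List.getLast?_append, hu]
  obtain ⟨p, hp⟩ := List.getLast?_eq_some_iff.1 hv
  have habove : ∀ w', w' <+: w₁ ++ w₂ → p.length < (A.run s w').length := fun w' hw' => by
    have := hmin w' hw'
    simp only [hp, List.length_append, List.length_singleton] at this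
    omega
  have habove₂ : ∀ w', w' <+: w₂ → p.length < (A.run (p ++ [v]) w').length := fun w' hw' => by
    rw [← hp, ← run_append]
    exact habove _ ((List.prefix_append_right_inj w₁).2 hw')
  generalize ht : A.run [v] w₂ = t
  have hst : s = p ++ t := by rw [← ht, ← A.run_append_left habove₂, ← hp, ← run_append, hrun]
  have habove₁ : ∀ w', w' <+: w₁ → p.length < (A.run (p ++ t) w').length :=
    fun w' hw' => hst ▸ habove w' (hw'.trans (List.prefix_append _ _))
  have h₁ : A.run t w₁ = [v] := by
    have := A.run_append_left habove₁
    rw [← hst, hp] at this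
    exact (List.append_cancel_left this).symm
  obtain ⟨hc₁, hc₂⟩ := hc.of_append
  refine walkLabels_mem_of_run_eq_singleton hcyc hcat hnil ?_ h₁ ht
    (CyclesIn.of_append_left A habove₁ (hst ▸ hc₁)) (CyclesIn.of_append_left A habove₂ (hp ▸ hc₂))
  rw [← hu, hst]
  simp [← ht, getLast?_run, List.getLast?_append, List.getLast?_cons]

theorem walkLabels_mem_of_stackAt_eq (hcyc : ClosedCyc W) (hcat : ClosedConcat W)
    (hnil : [] ∈ W) {ρ : ℕ → A.V} (hρ : A.ACObj W ρ) {a n : ℕ}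
    (h : A.stackAt ρ (a + n) = A.stackAt ρ a) :
    A.walkLabels ((List.range' a (n + 1)).map ρ) ∈ W := by
  rw [List.range'_succ, List.map_cons]
  exact walkLabels_mem_of_run_eq_self hcyc hcat hnil (A.getLast?_stackAt ρ a)
    (by rw [run_stackAt, h]) (hρ.cyclesIn a n)

end ClosedSet

end Arena

/-- if Y is closed under cyclic permutations and both Y and ¬Y
are closed under concatenation, then every arena is Y-unambiguous. -/
theorem stmt11 {U : Type} (Y : Set (List U)) (h1 : ClosedCyc Y)
    (h2 : ClosedConcat Y) (h3 : ClosedConcat Yᶜ) (A : Arena U) :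
    A.Unambiguous Y := by
  rintro π - ⟨⟨k, hk⟩, ⟨l, hl⟩⟩
  obtain ⟨a, n, hn, hk_eq, hl_eq⟩ := A.exists_stackAt_eq (A.shift π k) (A.shift π l) l k
  have hmemY := A.walkLabels_mem_of_stackAt_eq h1.insert_nil h2.insert_nil (Set.mem_insert _ _)
    (hk.mono (Set.subset_insert _ _)) hk_eq
  have hmemYc := A.walkLabels_mem_of_stackAt_eq h1.compl.insert_nil h3.insert_nil
    (Set.mem_insert _ _) (hl.mono (Set.subset_insert _ _)) hl_eq
  rw [A.map_shift_range', show l + a + k = k + a + l by omega] at hmemY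
  rw [A.map_shift_range'] at hmemYc
  have hne : A.walkLabels ((List.range' (k + a + l) (n + 1)).map π) ≠ [] := by
    rw [← List.length_pos_iff, A.length_walkLabels]
    simpa using hn
  exact hmemYc.resolve_left hne (hmemY.resolve_left hne)
end
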